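/- arXiv:1812.11515 — 2 statements merged into one kernel-verified Lean document; each statement's English description precedes it below -/
import Mathlib

section
/- Let X, U be real Banach spaces and H a real Hilbert space. Suppose F : X × U → H is continuously (Fréchet) differentiable with respect to (x,u) ∈ X × U, that for every u ∈ U the functional φ : X → ℝ, φ(x) = ½‖F(x,u)‖², satisfies the Palais–Smale condition, and that the partial differential F_x'(x,u) : X → H is bijective for every (x,u) ∈ X × U. Then there exists a unique function λ : U → X such that F(λ(u),u) = 0 for all u ∈ U; moreover λ is of class C¹ and its differential at u is λ'(u) = −[F_x'(λ(u),u)]^{-1} ∘ F_u'(λ(u),u). -/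
/-!
Fix `u` and put `φ = ½‖F(·, u)‖²`. Since `F_x'` is onto, the critical points of `φ` are exactly
the zeros of `F(·, u)`. Ekeland's variational principle produces almost-critical points at the
infimum of `φ`, and the Palais–Smale condition turns them into a minimiser, hence a zero.
If there were two zeros `a ≠ b`, invertibility of `F_x'(a, u)` bounds `φ` below by a positive
constant on a small sphere around `a`. The mountain-pass argument (Ekeland's principle on the
space of paths from `a` to `b`, played against a pseudo-gradient deformation of paths) then gives
a critical point at a positive level: a zero of `F(·, u)` where `φ > 0`, which is absurd.
Near every point the unique zero `λ(u)` coincides with the local implicit function, so it is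
`C¹`, and differentiating `F(λ(u), u) = 0` gives the formula for `λ'`.
-/

open Filter Topology

noncomputable section

/-- A `C¹` functional `I : X → ℝ` satisfies the Palais–Smale condition if every sequence
`(x k)` with `(I (x k))` bounded and `‖I' (x k)‖ → 0` admits a convergent subsequence. -/
def PalaisSmale {X : Type*} [NormedAddCommGroup X] [NormedSpace ℝ X] (I : X → ℝ) : Prop :=
  ∀ x : ℕ → X, (∃ M : ℝ, ∀ k, |I (x k)| ≤ M) →
    Tendsto (fun k => ‖fderiv ℝ I (x k)‖) atTop (𝓝 0) →
    ∃ (x₀ : X) (φ : ℕ → ℕ), StrictMono φ ∧ Tendsto (fun k => x (φ k)) atTop (𝓝 x₀)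

open Set Metric

section Ekeland

variable {E : Type*} [MetricSpace E] {ψ : E → ℝ} {κ : ℝ}

def ekelandSet (ψ : E → ℝ) (κ : ℝ) (x : E) : Set E := {y | ψ y + κ * dist x y ≤ ψ x}

theorem self_mem_ekelandSet (x : E) : x ∈ ekelandSet ψ κ x := by
  simp [ekelandSet]

theorem ekelandSet_trans (hκ : 0 ≤ κ) {x y z : E} (hy : y ∈ ekelandSet ψ κ x)
    (hz : z ∈ ekelandSet ψ κ y) : z ∈ ekelandSet ψ κ x := by
  simp only [ekelandSet, mem_ofPred_eq] at *
  nlinarith [dist_triangle x y z]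

theorem isClosed_ekelandSet (hψ : LowerSemicontinuous ψ) (x : E) :
    IsClosed (ekelandSet ψ κ x) :=
  (hψ.add (continuous_const.mul (continuous_const.dist continuous_id)).lowerSemicontinuous)
    |>.isClosed_preimage (ψ x)

theorem LowerSemicontinuous.exists_forall_le_add_mul_dist [CompleteSpace E]
    (hψ : LowerSemicontinuous ψ) (hbdd : BddBelow (range ψ)) (hκ : 0 < κ) (x₀ : E) :
    ∃ z, ψ z ≤ ψ x₀ ∧ ∀ y, ψ z ≤ ψ y + κ * dist z y := by
  have hnear : ∀ (n : ℕ) (x : E), ∃ y ∈ ekelandSet ψ κ x,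
      ∀ z ∈ ekelandSet ψ κ x, ψ y ≤ ψ z + 1 / (n + 1) := by
    intro n x
    have hne : (ψ '' ekelandSet ψ κ x).Nonempty :=
      ⟨_, mem_image_of_mem ψ (self_mem_ekelandSet x)⟩
    obtain ⟨_, ⟨y, hy, rfl⟩, hlt⟩ :=
      exists_lt_of_csInf_lt hne (lt_add_of_pos_right _ Nat.one_div_pos_of_nat)
    exact ⟨y, hy, fun z hz => hlt.le.trans <| add_le_add_left
      (csInf_le (hbdd.mono (image_subset_range _ _)) (mem_image_of_mem ψ hz)) _⟩
  choose next hnext_mem hnext_le using hnear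
  -- `x (n + 1)` is a `1 / (n + 1)`-minimiser of `ψ` on `ekelandSet ψ κ (x n)`.
  let x : ℕ → E := fun n => Nat.rec x₀ next n
  have hmono : ∀ m n, m ≤ n → x n ∈ ekelandSet ψ κ (x m) := by
    intro m n hmn
    induction n, hmn using Nat.le_induction with
    | base => exact self_mem_ekelandSet _
    | succ n _ ih => exact ekelandSet_trans hκ.le ih (hnext_mem n (x n))
  have hsmall : ∀ n, ∀ y ∈ ekelandSet ψ κ (x (n + 1)),
      dist (x (n + 1)) y ≤ 1 / (n + 1) / κ := by
    intro n y hy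
    have hle := hnext_le n (x n) y (ekelandSet_trans hκ.le (hmono n (n + 1) n.le_succ) hy)
    rw [le_div_iff₀ hκ, mul_comm]
    exact (le_sub_iff_add_le'.2 hy).trans (sub_le_iff_le_add'.2 hle)
  have hlim : Tendsto (fun n : ℕ => 1 / ((n : ℝ) + 1) / κ) atTop (𝓝 0) := by
    simpa using tendsto_one_div_add_atTop_nhds_zero_nat.div_const κ
  obtain ⟨z, hz⟩ := cauchySeq_tendsto_of_complete <| cauchySeq_of_le_tendsto_0' _
    (fun n m hnm => hsmall n _ (hmono (n + 1) (m + 1) (by omega))) hlim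
  have hz_mem : ∀ n, z ∈ ekelandSet ψ κ (x n) := fun n =>
    (isClosed_ekelandSet hψ (x n)).mem_of_tendsto hz
      (eventually_atTop.2 ⟨n, fun m hm => hmono n (m + 1) (by omega)⟩)
  refine ⟨z, ?_, fun y => ?_⟩
  · have h0 : ψ z + κ * dist x₀ z ≤ ψ x₀ := hz_mem 0
    nlinarith [mul_nonneg hκ.le (dist_nonneg (x := x₀) (y := z))]
  · by_contra! hy
    have hy_mem : ∀ n, y ∈ ekelandSet ψ κ (x (n + 1)) := fun n =>
      ekelandSet_trans hκ.le (hz_mem (n + 1)) hy.le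
    have hy_lim : Tendsto (fun n => x (n + 1)) atTop (𝓝 y) :=
      tendsto_iff_dist_tendsto_zero.2 <|
        squeeze_zero (fun _ => dist_nonneg) (fun n => hsmall n y (hy_mem n)) hlim
    obtain rfl := tendsto_nhds_unique hy_lim hz
    simp at hy

end Ekeland

section Calculus

variable {X : Type*} [NormedAddCommGroup X] [NormedSpace ℝ X]

theorem HasFDerivAt.norm_le_of_forall_le_add_mul_dist {φ : X → ℝ} {D : X →L[ℝ] ℝ} {z : X}
    {κ : ℝ} (hD : HasFDerivAt φ D z) (hκ : 0 ≤ κ) (h : ∀ y, φ z ≤ φ y + κ * dist z y) :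
    ‖D‖ ≤ κ := by
  have hlower : ∀ w, -(κ * ‖w‖) ≤ D w := by
    intro w
    have hD' : HasFDerivAt φ D (z + (0 : ℝ) • w) := by simpa using hD
    have hline : HasDerivAt (fun t : ℝ => z + t • w) w 0 := by
      simpa using ((hasDerivAt_id (0 : ℝ)).smul_const w).const_add z
    refine ge_of_tendsto ((hasDerivAt_iff_tendsto_slope.1 (hD'.comp_hasDerivAt 0 hline))
      |>.mono_left (show 𝓝[>] (0 : ℝ) ≤ 𝓝[≠] 0 from nhdsWithin_mono 0 fun t ht => ne_of_gt ht)) ?_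
    filter_upwards [self_mem_nhdsWithin] with t (ht : 0 < t)
    have hzt := h (z + t • w)
    rw [dist_eq_norm, sub_add_cancel_left, norm_neg, norm_smul, Real.norm_of_nonneg ht.le] at hzt
    rw [slope_def_field, sub_zero, le_div_iff₀ ht]
    simp only [Function.comp_apply, zero_smul, add_zero]
    linarith
  refine D.opNorm_le_bound hκ fun w => abs_le.2 ⟨hlower w, ?_⟩
  simpa using hlower (-w)

variable {H : Type*} [NormedAddCommGroup H] [InnerProductSpace ℝ H]

theorem eq_zero_of_fderiv_half_norm_sq_eq_zero {f : X → H} {x : X}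
    (hf : DifferentiableAt ℝ f x) (hsurj : Function.Surjective (fderiv ℝ f x))
    (h : fderiv ℝ (fun y => (1 / 2 : ℝ) * ‖f y‖ ^ 2) x = 0) : f x = 0 := by
  obtain ⟨v, hv⟩ := hsurj (f x)
  have hv0 := congr($((hf.hasFDerivAt.norm_sq.const_mul (1 / 2 : ℝ)).fderiv.symm.trans h) v)
  simpa [hv] using hv0

end Calculus

section PalaisSmale

variable {X : Type*} [NormedAddCommGroup X] [NormedSpace ℝ X] {φ : X → ℝ}

theorem PalaisSmale.exists_fderiv_eq_zero_of_tendsto (hPS : PalaisSmale φ) (hφ : Continuous φ)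
    (hφ' : Continuous (fderiv ℝ φ)) {x : ℕ → X} {c : ℝ}
    (hc : Tendsto (fun k => φ (x k)) atTop (𝓝 c))
    (hd : Tendsto (fun k => ‖fderiv ℝ φ (x k)‖) atTop (𝓝 0)) :
    ∃ z, φ z = c ∧ fderiv ℝ φ z = 0 := by
  obtain ⟨M, hM⟩ := hc.abs.bddAbove_range
  obtain ⟨z, σ, hσ, hz⟩ := hPS x ⟨M, fun k => hM ⟨k, rfl⟩⟩ hd
  exact ⟨z, tendsto_nhds_unique ((hφ.tendsto z).comp hz) (hc.comp hσ.tendsto_atTop),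
    norm_eq_zero.1 <|
      tendsto_nhds_unique ((hφ'.norm.tendsto z).comp hz) (hd.comp hσ.tendsto_atTop)⟩

theorem PalaisSmale.exists_fderiv_eq_zero_of_bddBelow [CompleteSpace X] (hPS : PalaisSmale φ)
    (hφ : ContDiff ℝ 1 φ) (hbdd : BddBelow (range φ)) :
    ∃ z, φ z = ⨅ x, φ x ∧ fderiv ℝ φ z = 0 := by
  have hseq : ∀ k : ℕ, ∃ y,
      φ y < (⨅ x, φ x) + 1 / (k + 1) ∧ ‖fderiv ℝ φ y‖ ≤ 1 / (k + 1) := by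
    intro k
    have hε : (0 : ℝ) < 1 / (k + 1) := Nat.one_div_pos_of_nat
    obtain ⟨x₀, hx₀⟩ := exists_lt_of_ciInf_lt (lt_add_of_pos_right (⨅ x, φ x) hε)
    obtain ⟨y, hy, hmin⟩ :=
      hφ.continuous.lowerSemicontinuous.exists_forall_le_add_mul_dist hbdd hε x₀
    exact ⟨y, hy.trans_lt hx₀, (hφ.differentiable one_ne_zero y).hasFDerivAt
      |>.norm_le_of_forall_le_add_mul_dist hε.le hmin⟩
  choose y hyφ hyd using hseq
  have hupper := tendsto_one_div_add_atTop_nhds_zero_nat.const_add (⨅ x, φ x)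
  rw [add_zero] at hupper
  exact hPS.exists_fderiv_eq_zero_of_tendsto hφ.continuous (hφ.continuous_fderiv one_ne_zero)
    (tendsto_of_tendsto_of_tendsto_of_le_of_le tendsto_const_nhds hupper
      (fun k => ciInf_le hbdd _) fun k => (hyφ k).le)
    (squeeze_zero (fun _ => norm_nonneg _) hyd tendsto_one_div_add_atTop_nhds_zero_nat)

end PalaisSmale

section Paths

variable {X : Type*} [TopologicalSpace X] {φ : X → ℝ}

def pathsBetween (a b : X) : Set C(unitInterval, X) := {γ | γ 0 = a ∧ γ 1 = b}

def pathMax (φ : X → ℝ) (γ : C(unitInterval, X)) : ℝ := ⨆ t, φ (γ t)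

def mountainPassLevel (φ : X → ℝ) (a b : X) : ℝ := ⨅ γ : pathsBetween a b, pathMax φ γ

theorem isClosed_pathsBetween [T2Space X] (a b : X) : IsClosed (pathsBetween a b) :=
  (isClosed_eq (continuous_eval_const 0) continuous_const).inter
    (isClosed_eq (continuous_eval_const 1) continuous_const)

theorem nonempty_pathsBetween {E : Type*} [NormedAddCommGroup E] [NormedSpace ℝ E] (a b : E) :
    (pathsBetween a b).Nonempty :=
  ⟨⟨fun s => a + (s : ℝ) • (b - a), by fun_prop⟩, by simp [pathsBetween]⟩

theorem le_pathMax (hφ : Continuous φ) (γ : C(unitInterval, X)) (t : unitInterval) :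
    φ (γ t) ≤ pathMax φ γ :=
  le_ciSup (isCompact_range (hφ.comp γ.continuous)).bddAbove t

theorem pathMax_le {γ : C(unitInterval, X)} {M : ℝ} (h : ∀ t, φ (γ t) ≤ M) : pathMax φ γ ≤ M :=
  ciSup_le h

theorem lowerSemicontinuous_pathMax (hφ : Continuous φ) : LowerSemicontinuous (pathMax φ) :=
  lowerSemicontinuous_ciSup (fun γ => (isCompact_range (hφ.comp γ.continuous)).bddAbove)
    fun t => (hφ.comp (continuous_eval_const t)).lowerSemicontinuous

theorem bddBelow_pathMax (hφ : Continuous φ) (a b : X) :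
    BddBelow (range fun γ : pathsBetween a b => pathMax φ γ) :=
  ⟨φ a, by
    rintro _ ⟨γ, rfl⟩
    simpa [γ.2.1] using le_pathMax hφ γ.1 0⟩

theorem mountainPassLevel_le (hφ : Continuous φ) {a b : X} {γ : C(unitInterval, X)}
    (hγ : γ ∈ pathsBetween a b) : mountainPassLevel φ a b ≤ pathMax φ γ :=
  ciInf_le (bddBelow_pathMax hφ a b) ⟨γ, hγ⟩

theorem le_mountainPassLevel {E : Type*} [NormedAddCommGroup E] [NormedSpace ℝ E] {φ : E → ℝ}
    (hφ : Continuous φ) {a b : E} {r ρ : ℝ} (hr : 0 ≤ r)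
    (hrb : r ≤ ‖b - a‖) (hρ : ∀ x, ‖x - a‖ = r → ρ ≤ φ x) : ρ ≤ mountainPassLevel φ a b := by
  have := (nonempty_pathsBetween a b).to_subtype
  refine le_ciInf fun γ => ?_
  have hr_mem : r ∈ Icc ‖γ.1 0 - a‖ ‖γ.1 1 - a‖ := by
    rw [γ.2.1, γ.2.2, sub_self, norm_zero]
    exact ⟨hr, hrb⟩
  obtain ⟨s, hs⟩ :=
    intermediate_value_univ 0 1 (γ.1.continuous.sub continuous_const).norm hr_mem
  exact (hρ _ hs).trans (le_pathMax hφ γ.1 s)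

end Paths

section Deformation

variable {X : Type*} [NormedAddCommGroup X] [NormedSpace ℝ X]

theorem IsCompact.exists_uniform_descent_direction {D : X → X →L[ℝ] ℝ} (hD : Continuous D)
    {K : Set X} (hK : IsCompact K) {δ : ℝ} (hδ : ∀ x ∈ K, δ < ‖D x‖) :
    ∃ r > 0, ∀ x ∈ K, ∃ w : X, ‖w‖ ≤ 1 ∧ ∀ y ∈ ball x r, δ < D y w := by
  have hcover : K ⊆ ⋃ w : closedBall (0 : X) 1, {y | δ < D y w} := by
    intro x hx
    obtain ⟨w, hw, hδw⟩ := (D x).exists_lt_apply_of_lt_opNorm (hδ x hx)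
    rw [Real.norm_eq_abs] at hδw
    rcases le_or_gt 0 (D x w) with hpos | hneg
    · exact mem_iUnion.2 ⟨⟨w, mem_closedBall_zero_iff.2 hw.le⟩, by
        simpa [abs_of_nonneg hpos] using hδw⟩
    · exact mem_iUnion.2 ⟨⟨-w, by simpa using hw.le⟩, by simpa [abs_of_neg hneg] using hδw⟩
  obtain ⟨r, hr, hball⟩ := lebesgue_number_lemma_of_metric hK
    (fun w => isOpen_lt continuous_const (hD.clm_apply continuous_const)) hcover
  refine ⟨r, hr, fun x hx => ?_⟩
  obtain ⟨w, hw⟩ := hball x hx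
  exact ⟨w, mem_closedBall_zero_iff.1 w.2, fun y hy => hw hy⟩

theorem exists_continuous_descent_field {T : Type*} [TopologicalSpace T] [NormalSpace T]
    [ParacompactSpace T] {D : X → X →L[ℝ] ℝ} (hD : Continuous D) {γ : T → X}
    (hγ : Continuous γ) {S : Set T} (hS : IsClosed S) (hSc : IsCompact S) {δ : ℝ}
    (hδ : ∀ s ∈ S, δ < ‖D (γ s)‖) :
    ∃ r > 0, ∃ V : C(T, X), ∀ s, ‖V s‖ ≤ 1 ∧ (s ∈ S → ∀ y ∈ ball (γ s) r, δ ≤ D y (V s)) := by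
  obtain ⟨r, hr, hdir⟩ :=
    (hSc.image hγ).exists_uniform_descent_direction hD (forall_mem_image.2 hδ)
  refine ⟨r / 2, half_pos hr, exists_continuous_forall_mem_convex_of_local_const
    (t := fun s => {v : X | ‖v‖ ≤ 1 ∧ (s ∈ S → ∀ y ∈ ball (γ s) (r / 2), δ ≤ D y v)})
    (fun s => ?_) fun s₀ => ?_⟩
  · rintro u ⟨hu, hu'⟩ v ⟨hv, hv'⟩ a b ha hb hab
    refine ⟨?_, fun hs y hy => ?_⟩
    · simpa using convex_closedBall (0 : X) 1 (by simpa using hu) (by simpa using hv) ha hb hab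
    · rw [map_add, map_smul, map_smul, smul_eq_mul, smul_eq_mul]
      calc δ = a * δ + b * δ := by rw [← add_mul, hab, one_mul]
        _ ≤ _ := add_le_add (mul_le_mul_of_nonneg_left (hu' hs y hy) ha)
          (mul_le_mul_of_nonneg_left (hv' hs y hy) hb)
  · by_cases hs₀ : s₀ ∈ S
    · obtain ⟨w, hw, hwD⟩ := hdir (γ s₀) (mem_image_of_mem γ hs₀)
      refine ⟨w, ?_⟩
      filter_upwards [hγ.continuousAt (ball_mem_nhds (γ s₀) (half_pos hr))] with s hs
      refine ⟨hw, fun _ y hy => (hwD y ?_).le⟩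
      calc dist y (γ s₀) ≤ dist y (γ s) + dist (γ s) (γ s₀) := dist_triangle _ _ _
        _ < r / 2 + r / 2 := add_lt_add hy hs
        _ = r := add_halves r
    · refine ⟨0, ?_⟩
      filter_upwards [hS.isOpen_compl.mem_nhds hs₀] with s hs
      exact ⟨by simp, fun h => absurd h hs⟩

theorem image_sub_smul_le_of_le_fderiv {φ : X → ℝ} (hφ : Differentiable ℝ φ) {x w : X}
    {t c : ℝ} (ht : 0 ≤ t) (h : ∀ τ ∈ Icc 0 t, c ≤ fderiv ℝ φ (x - τ • w) w) :
    φ (x - t • w) ≤ φ x - t * c := by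
  have hg : ∀ τ : ℝ, HasDerivAt (fun τ => φ (x - τ • w)) (-fderiv ℝ φ (x - τ • w) w) τ := by
    intro τ
    have hline : HasDerivAt (fun τ : ℝ => x - τ • w) (-w) τ := by
      simpa using ((hasDerivAt_id τ).smul_const w).const_sub x
    exact (hφ (x - τ • w)).hasFDerivAt.comp_hasDerivAt τ hline |>.congr_deriv (by simp)
  have hmvt := (convex_Icc 0 t).image_sub_le_mul_sub_of_deriv_le
    (fun τ _ => (hg τ).continuousAt.continuousWithinAt)
    (fun τ _ => (hg τ).differentiableAt.differentiableWithinAt)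
    (fun τ hτ => by rw [(hg τ).deriv]; exact neg_le_neg (h τ (interior_subset hτ)))
    0 (left_mem_Icc.2 ht) t (right_mem_Icc.2 ht) ht
  simp only [zero_smul, sub_zero] at hmvt
  linarith

theorem image_sub_smul_le_of_forall_mem_ball {φ : X → ℝ} (hφ : Differentiable ℝ φ) {x v : X}
    (hv : ‖v‖ ≤ 1) {t r c : ℝ} (ht : 0 ≤ t) (htr : t < r)
    (h : ∀ y ∈ ball x r, c ≤ fderiv ℝ φ y v) : φ (x - t • v) ≤ φ x - t * c :=
  image_sub_smul_le_of_le_fderiv hφ ht fun τ hτ => h _ <| by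
    rw [mem_ball, dist_eq_norm, sub_sub_cancel_left, norm_neg, norm_smul,
      Real.norm_of_nonneg hτ.1]
    exact (mul_le_of_le_one_right hτ.1 hv).trans_lt (hτ.2.trans_lt htr)

end Deformation

section MountainPass

variable {X : Type*} [NormedAddCommGroup X] [NormedSpace ℝ X] {φ : X → ℝ}

theorem exists_deformed_path (hφ : Differentiable ℝ φ) (hφ' : Continuous (fderiv ℝ φ))
    (γ : C(unitInterval, X)) {δ : ℝ} (hδ : 0 < δ)
    (hcrit : ∀ s, pathMax φ γ - δ ≤ φ (γ s) → δ < ‖fderiv ℝ φ (γ s)‖)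
    (h0 : φ (γ 0) ≤ pathMax φ γ - δ) (h1 : φ (γ 1) ≤ pathMax φ γ - δ) :
    ∃ h > 0, ∃ η : C(unitInterval, X), η 0 = γ 0 ∧ η 1 = γ 1 ∧ dist η γ ≤ h ∧
      pathMax φ η ≤ pathMax φ γ - δ * h := by
  set m := pathMax φ γ
  have hφγ : Continuous fun s => φ (γ s) := hφ.continuous.comp γ.continuous
  have hS : IsClosed {s | m - δ ≤ φ (γ s)} := isClosed_le continuous_const hφγ
  obtain ⟨r, hr, V, hV⟩ :=
    exists_continuous_descent_field hφ' γ.continuous hS hS.isCompact hcrit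
  -- `θ` switches the deformation off where `φ ∘ γ` is far below its maximum, e.g. at the ends.
  obtain ⟨θ, hθ_low, hθ_high, hθ01⟩ := exists_continuous_zero_one_of_isClosed
    (isClosed_le hφγ continuous_const : IsClosed {s | φ (γ s) ≤ m - δ})
    (isClosed_le continuous_const hφγ : IsClosed {s | m - δ / 2 ≤ φ (γ s)})
    (disjoint_left.2 fun s (h₁ : φ (γ s) ≤ m - δ) (h₂ : m - δ / 2 ≤ φ (γ s)) => by linarith)
  set h := min (r / 2) (1 / 2)
  have hh : 0 < h := by positivity
  set η : C(unitInterval, X) := γ - h • (θ • V)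
  have hη : ∀ s, η s = γ s - (h * θ s) • V s := fun s => by simp [η, mul_smul]
  have hθh : ∀ s, h * θ s ≤ h := fun s => mul_le_of_le_one_right hh.le (hθ01 s).2
  have hdesc : ∀ s, φ (η s) ≤ φ (γ s) - h * θ s * δ := by
    intro s
    by_cases hs : m - δ ≤ φ (γ s)
    · rw [hη]
      exact image_sub_smul_le_of_forall_mem_ball hφ (hV s).1 (mul_nonneg hh.le (hθ01 s).1)
        ((hθh s).trans_lt ((min_le_left _ _).trans_lt (half_lt_self hr))) ((hV s).2 hs)
    · simp [hη, hθ_low (not_le.1 hs).le]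
  refine ⟨h, hh, η, by simp [hη, hθ_low h0], by simp [hη, hθ_low h1], ?_,
    pathMax_le fun s => ?_⟩
  · rw [dist_eq_norm, ContinuousMap.norm_le _ hh.le]
    intro s
    rw [ContinuousMap.sub_apply, hη, sub_sub_cancel_left, norm_neg, norm_smul,
      Real.norm_of_nonneg (mul_nonneg hh.le (hθ01 s).1)]
    exact (mul_le_of_le_one_right (mul_nonneg hh.le (hθ01 s).1) (hV s).1).trans (hθh s)
  · have hγs : φ (γ s) ≤ m := le_pathMax hφ.continuous γ s
    have hηs := hdesc s
    by_cases hs : m - δ / 2 ≤ φ (γ s)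
    · rw [show θ s = 1 from hθ_high hs, mul_one] at hηs
      linarith
    · have hδh : δ * h ≤ δ / 2 := by nlinarith [min_le_right (r / 2) (1 / 2 : ℝ)]
      nlinarith [mul_nonneg (mul_nonneg hh.le (hθ01 s).1) hδ.le]

theorem exists_almost_critical_of_mountainPassLevel [CompleteSpace X] (hφ : ContDiff ℝ 1 φ)
    {a b : X} {δ : ℝ} (hδ : 0 < δ) (ha : φ a + δ ≤ mountainPassLevel φ a b)
    (hb : φ b + δ ≤ mountainPassLevel φ a b) :
    ∃ x, |φ x - mountainPassLevel φ a b| ≤ δ ∧ ‖fderiv ℝ φ x‖ ≤ δ := by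
  set c := mountainPassLevel φ a b
  by_contra! hno
  have := (nonempty_pathsBetween a b).to_subtype
  have : CompleteSpace (pathsBetween a b) := (isClosed_pathsBetween a b).completeSpace_coe
  obtain ⟨γ₀, hγ₀⟩ := exists_lt_of_ciInf_lt (lt_add_of_pos_right c hδ)
  obtain ⟨γ, hγγ₀, hγ⟩ :=
    ((lowerSemicontinuous_pathMax hφ.continuous).comp continuous_subtype_val)
      |>.exists_forall_le_add_mul_dist (bddBelow_pathMax hφ.continuous a b) (half_pos hδ) γ₀
  have hcγ : c ≤ pathMax φ γ := mountainPassLevel_le hφ.continuous γ.2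
  have hγc : pathMax φ γ < c + δ := lt_of_le_of_lt hγγ₀ hγ₀
  obtain ⟨h, hh, η, hη0, hη1, hdist, hmax⟩ := exists_deformed_path
    (hφ.differentiable one_ne_zero) (hφ.continuous_fderiv one_ne_zero) γ.1 hδ
    (fun s hs => hno _ <| abs_le.2 ⟨by linarith, by linarith [le_pathMax hφ.continuous γ.1 s]⟩)
    (by rw [γ.2.1]; linarith) (by rw [γ.2.2]; linarith)
  -- Ekeland's principle with slope `δ / 2` rules out a path that is at distance at most `h`
  -- from `γ` and has maximum at most `pathMax φ γ - δ * h`.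
  have hEk := hγ ⟨η, hη0.trans γ.2.1, hη1.trans γ.2.2⟩
  rw [Subtype.dist_eq, dist_comm] at hEk
  change pathMax φ γ ≤ pathMax φ η + δ / 2 * dist η γ at hEk
  nlinarith [mul_le_mul_of_nonneg_left hdist (half_pos hδ).le]

theorem PalaisSmale.exists_fderiv_eq_zero_of_mountainPass [CompleteSpace X]
    (hPS : PalaisSmale φ) (hφ : ContDiff ℝ 1 φ) {a b : X} (ha : φ a < mountainPassLevel φ a b)
    (hb : φ b < mountainPassLevel φ a b) :
    ∃ z, φ z = mountainPassLevel φ a b ∧ fderiv ℝ φ z = 0 := by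
  set c := mountainPassLevel φ a b
  set δ : ℕ → ℝ := fun k => min (c - max (φ a) (φ b)) (1 / (k + 1))
  have hδ : ∀ k, 0 < δ k := fun k => lt_min (sub_pos.2 (max_lt ha hb)) Nat.one_div_pos_of_nat
  have hδc : ∀ k, max (φ a) (φ b) + δ k ≤ c := fun k => by
    linarith [min_le_left (c - max (φ a) (φ b)) (1 / (k + 1 : ℝ))]
  choose x hxφ hxd using fun k => exists_almost_critical_of_mountainPassLevel hφ (hδ k)
    (by linarith [le_max_left (φ a) (φ b), hδc k])
    (by linarith [le_max_right (φ a) (φ b), hδc k])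
  have hδ_lim : ∀ k, δ k ≤ 1 / (k + 1) := fun k => min_le_right _ _
  exact hPS.exists_fderiv_eq_zero_of_tendsto hφ.continuous (hφ.continuous_fderiv one_ne_zero)
    (tendsto_iff_norm_sub_tendsto_zero.2 <| squeeze_zero (fun _ => norm_nonneg _)
      (fun k => (hxφ k).trans (hδ_lim k)) tendsto_one_div_add_atTop_nhds_zero_nat)
    (squeeze_zero (fun _ => norm_nonneg _) (fun k => (hxd k).trans (hδ_lim k))
      tendsto_one_div_add_atTop_nhds_zero_nat)

end MountainPass

section Zeros

open Asymptotics

theorem ContinuousLinearMap.isInvertible_of_bijective {𝕜 E F : Type*} [NontriviallyNormedField 𝕜]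
    [NormedAddCommGroup E] [NormedSpace 𝕜 E] [CompleteSpace E] [NormedAddCommGroup F]
    [NormedSpace 𝕜 F] [CompleteSpace F] {f : E →L[𝕜] F} (hf : Function.Bijective f) :
    f.IsInvertible :=
  ⟨.ofBijective f (LinearMap.ker_eq_bot.2 hf.1) (LinearMap.range_eq_top.2 hf.2),
    ContinuousLinearEquiv.coe_ofBijective _ _ _⟩

variable {X H : Type*} [NormedAddCommGroup X] [NormedSpace ℝ X]

theorem HasFDerivAt.exists_pos_le_norm_sub_of_norm_sub_eq [NormedAddCommGroup H]
    [NormedSpace ℝ H] {f : X → H} {f' : X →L[ℝ] H} {a : X} (hf : HasFDerivAt f f' a)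
    (hf' : f'.IsInvertible) {R : ℝ} (hR : 0 < R) :
    ∃ r ∈ Ioo 0 R, ∃ μ > 0, ∀ x, ‖x - a‖ = r → μ ≤ ‖f x - f a‖ := by
  obtain ⟨e, rfl⟩ := hf'
  have hO : (fun x => x - a) =O[𝓝 a] fun x => f x - f a := by
    have hlin := e.isBigO_sub_rev (𝓝 a) a
    exact hlin.trans (IsEquivalent.isBigO_symm (hf.isLittleO.trans_isBigO hlin))
  obtain ⟨C, hC, hCbound⟩ := hO.exists_pos
  obtain ⟨ε, hε, hball⟩ := Metric.eventually_nhds_iff_ball.1 hCbound.bound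
  set r := min (ε / 2) (R / 2)
  have hr : 0 < r := by positivity
  refine ⟨r, ⟨hr, (min_le_right _ _).trans_lt (half_lt_self hR)⟩, r / C, by positivity,
    fun x hx => ?_⟩
  have hx_ball : x ∈ ball a ε := by
    rw [mem_ball, dist_eq_norm, hx]
    exact (min_le_left _ _).trans_lt (half_lt_self hε)
  have hxC := hball x hx_ball
  rw [hx] at hxC
  rwa [div_le_iff₀ hC, mul_comm]

variable [NormedAddCommGroup H] [InnerProductSpace ℝ H]

theorem exists_unique_eq_zero_of_palaisSmale [CompleteSpace X] [CompleteSpace H] {f : X → H}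
    (hf : ContDiff ℝ 1 f) (hPS : PalaisSmale fun x => (1 / 2 : ℝ) * ‖f x‖ ^ 2)
    (hbij : ∀ x, Function.Bijective (fderiv ℝ f x)) : ∃! x, f x = 0 := by
  set φ := fun x => (1 / 2 : ℝ) * ‖f x‖ ^ 2
  have hφ : ContDiff ℝ 1 φ := contDiff_const.mul (hf.norm_sq ℝ)
  have hzero : ∀ z, fderiv ℝ φ z = 0 → f z = 0 := fun z =>
    eq_zero_of_fderiv_half_norm_sq_eq_zero (hf.differentiable one_ne_zero z) (hbij z).2
  obtain ⟨a, -, ha⟩ := hPS.exists_fderiv_eq_zero_of_bddBelow hφ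
    ⟨0, by rintro _ ⟨x, rfl⟩; positivity⟩
  refine ⟨a, hzero a ha, fun b hb => ?_⟩
  by_contra hba
  obtain ⟨r, ⟨hr, hrb⟩, μ, hμ, hsphere⟩ :=
    (hf.differentiable one_ne_zero a).hasFDerivAt.exists_pos_le_norm_sub_of_norm_sub_eq
      (ContinuousLinearMap.isInvertible_of_bijective (hbij a))
      (norm_pos_iff.2 (sub_ne_zero.2 hba))
  have hlevel : (1 / 2) * μ ^ 2 ≤ mountainPassLevel φ a b :=
    le_mountainPassLevel hφ.continuous hr.le hrb.le fun x hx => by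
      have hμx := hsphere x hx
      rw [hzero a ha, sub_zero] at hμx
      simp only [φ]
      gcongr
  have hlevel_pos : 0 < mountainPassLevel φ a b := lt_of_lt_of_le (by positivity) hlevel
  have hφ0 : ∀ x, f x = 0 → φ x = 0 := fun x hx => by simp [φ, hx]
  obtain ⟨z, hzc, hz⟩ := hPS.exists_fderiv_eq_zero_of_mountainPass hφ
    (by rwa [hφ0 a (hzero a ha)]) (by rwa [hφ0 b hb])
  rw [hφ0 z (hzero z hz)] at hzc
  exact hlevel_pos.ne hzc

end Zeros

section Implicit

variable {X U H : Type*} [NormedAddCommGroup X] [NormedSpace ℝ X] [NormedAddCommGroup U]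
  [NormedSpace ℝ U] [NormedAddCommGroup H] [NormedSpace ℝ H] {F : X × U → H}

theorem contDiffAt_of_forall_apply_eq_zero_iff [CompleteSpace X] [CompleteSpace U]
    [CompleteSpace H] {n : WithTop ℕ∞} {lam : U → X} {u₀ : U}
    (hF : ContDiffAt ℝ n F (lam u₀, u₀)) (hn : n ≠ 0)
    (hinv : (fderiv ℝ (fun x => F (x, u₀)) (lam u₀)).IsInvertible)
    (hlam : ∀ u x, F (x, u) = 0 ↔ x = lam u) : ContDiffAt ℝ n lam u₀ := by
  -- Mathlib's implicit function theorem solves for the second factor of the product.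
  set f : U × X → H := fun p => F (p.2, p.1)
  have hf : ContDiffAt ℝ n f (u₀, lam u₀) :=
    hF.comp (u₀, lam u₀) (contDiff_snd.prodMk contDiff_fst).contDiffAt
  have hpartial :
      fderiv ℝ f (u₀, lam u₀) ∘L .inr ℝ U X = fderiv ℝ (fun x => F (x, u₀)) (lam u₀) :=
    ((hf.differentiableAt hn).hasFDerivAt.comp (lam u₀)
      (hasFDerivAt_prodMk_right u₀ (lam u₀))).fderiv.symm
  rw [← hpartial] at hinv
  refine (hf.contDiffAt_implicitFunction hn hinv).congr_of_eventuallyEq ?_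
  filter_upwards [hf.eventually_apply_implicitFunction hn hinv] with u hu
  exact ((hlam u _).1 (hu.trans ((hlam u₀ _).2 rfl))).symm

theorem fderiv_apply_fderiv_eq_neg_of_forall_apply_eq_zero {g : U → X} {u : U}
    (hF : DifferentiableAt ℝ F (g u, u)) (hg : DifferentiableAt ℝ g u)
    (h : ∀ u', F (g u', u') = 0) (v : U) : fderiv ℝ (fun x => F (x, u)) (g u) (fderiv ℝ g u v) =
      -fderiv ℝ (fun u' => F (g u, u')) u v := by
  have hx : HasFDerivAt (fun x => F (x, u)) (fderiv ℝ F (g u, u) ∘L .inl ℝ X U) (g u) :=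
    hF.hasFDerivAt.comp (g u) (hasFDerivAt_prodMk_left (g u) u)
  have hu : HasFDerivAt (fun u' => F (g u, u')) (fderiv ℝ F (g u, u) ∘L .inr ℝ X U) u :=
    hF.hasFDerivAt.comp u (hasFDerivAt_prodMk_right (g u) u)
  have hcomp := hF.hasFDerivAt.comp (f := fun u' => (g u', u')) u
    (hg.hasFDerivAt.prodMk (hasFDerivAt_id u))
  have hzero : fderiv ℝ F (g u, u) ∘L (fderiv ℝ g u).prod (.id ℝ U) = 0 :=
    hcomp.unique (by simpa [Function.comp_def, h] using hasFDerivAt_const (0 : H) u)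
  rw [hx.fderiv, hu.fderiv, eq_neg_iff_add_eq_zero]
  simpa [← map_add] using congr($hzero v)

end Implicit

/-- **Global implicit function theorem.**
Let `X, U` be real Banach spaces, `H` a real Hilbert space, and `F : X × U → H` a `C¹` map.
Assume that for every `u` the functional `x ↦ ½‖F(x,u)‖²` satisfies the Palais–Smale
condition and that the partial differential `F_x'(x,u) : X → H` is bijective for every
`(x,u)`.  Then there is a unique map `λ : U → X` with `F(λ(u),u) = 0` for all `u`; it is
of class `C¹`, and its differential satisfies
`F_x'(λ(u),u) (λ'(u) v) = − F_u'(λ(u),u) v`, i.e. `λ'(u) = −[F_x'(λ(u),u)]⁻¹ ∘ F_u'(λ(u),u)`. -/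
theorem global_implicit_function_theorem
    {X U H : Type*} [NormedAddCommGroup X] [NormedSpace ℝ X] [CompleteSpace X]
    [NormedAddCommGroup U] [NormedSpace ℝ U] [CompleteSpace U]
    [NormedAddCommGroup H] [InnerProductSpace ℝ H] [CompleteSpace H]
    (F : X × U → H) (hF : ContDiff ℝ 1 F)
    (hPS : ∀ u : U, PalaisSmale fun x : X => (1 / 2 : ℝ) * ‖F (x, u)‖ ^ 2)
    (hbij : ∀ (x : X) (u : U), Function.Bijective (fderiv ℝ (fun x' => F (x', u)) x)) :
    ∃ lam : U → X,
      (∀ u, F (lam u, u) = 0) ∧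
      (∀ lam' : U → X, (∀ u, F (lam' u, u) = 0) → lam' = lam) ∧
      ContDiff ℝ 1 lam ∧
      ∀ u v, (fderiv ℝ (fun x' => F (x', u)) (lam u)) (fderiv ℝ lam u v) =
        -(fderiv ℝ (fun u' => F (lam u, u')) u) v := by
  choose lam hlam huniq using fun u => exists_unique_eq_zero_of_palaisSmale
    (hF.comp (contDiff_id.prodMk contDiff_const)) (hPS u) fun x => hbij x u
  have hlam_iff : ∀ u x, F (x, u) = 0 ↔ x = lam u := fun u x => ⟨huniq u x, fun h => h ▸ hlam u⟩
  have hlam_C1 : ContDiff ℝ 1 lam := contDiff_iff_contDiffAt.2 fun u =>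
    contDiffAt_of_forall_apply_eq_zero_iff hF.contDiffAt one_ne_zero
      (ContinuousLinearMap.isInvertible_of_bijective (hbij (lam u) u)) hlam_iff
  refine ⟨lam, hlam, fun lam' hlam' => funext fun u => huniq u _ (hlam' u), hlam_C1,
    fun u v => ?_⟩
  exact fderiv_apply_fderiv_eq_neg_of_forall_apply_eq_zero (hF.differentiable one_ne_zero _)
    (hlam_C1.differentiable one_ne_zero u) hlam v
end
end

section
/- Let β > 1/2, g ∈ L²((0,π),ℝ) with ‖g‖²_{L²} ≤ C, and let x_g ∈ D((-Δ)^β) be the unique solution of (-Δ)^β x = g. Then for every h with 0 < h < π one has ∫₀^h |x_g(t)|² dt ≤ (2/π) C ζ(4β) h, ∫_{π−h}^π |x_g(t)|² dt ≤ (2/π) C ζ(4β) h, and ∫₀^{π−h} |x_g(t+h) − x_g(t)|² dt ≤ 4 C ζ(4β−1) h; consequently the zero-extension x̃_g of x_g to ℝ satisfies ∫_ℝ |x̃_g(t+h) − x̃_g(t)|² dt ≤ const · |h| for |h| < π, with a constant depending only on C and β. -/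
open MeasureTheory Real Filter Topology

noncomputable section

/-- Lebesgue measure restricted to the interval `(0, π)`. -/
def μπ : Measure ℝ := MeasureTheory.volume.restrict (Set.Ioo 0 Real.pi)

/-- Partial sums of the sine series `∑_{j≥1} a_j √(2/π) sin(j t)` (scalar case; the
coefficient `a j` is attached to `sin ((j+1) t)`). -/
def sinePartialSumR (a : ℕ → ℝ) (N : ℕ) : ℝ → ℝ := fun t =>
  ∑ j ∈ Finset.range N, (Real.sqrt (2 / Real.pi) * Real.sin (((j : ℝ) + 1) * t)) * a j

/-- `x` has the sine expansion with coefficients `a`, in the sense of `L²((0,π),ℝ)`. -/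
def HasSineExpansionR (x : ℝ → ℝ) (a : ℕ → ℝ) : Prop :=
  Tendsto (fun N => eLpNorm (fun t => x t - sinePartialSumR a N t) 2 μπ) atTop (𝓝 0)

/-- The Riemann zeta function (as a real series): `ζ(s) = ∑_{j≥1} j^{-s}`. -/
def zeta' (s : ℝ) : ℝ := ∑' j : ℕ, ((j : ℝ) + 1) ^ (-s)

/-!
Since `β > 1/2`, the sine coefficients `a_j = (j+1)^(-2β) b_j` of `x` are absolutely summable,
with `(∑ |a_j|)² ≤ ζ(4β) ∑ b_j² ≤ ζ(4β) C` by Cauchy–Schwarz and Parseval for `g`. Hence `x`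
agrees a.e. on `(0, π)` with its uniformly convergent sine series, and `x² ≤ (2/π) C ζ(4β)`.
Under a shift by `h` the `j`-th mode moves by at most `√(2/π) min(2, (j+1)h)`, and
`min(2, y)² ≤ 2y`, so Cauchy–Schwarz once more gives `(x(t+h) - x(t))² ≤ (4/π) C ζ(4β-1) h`.
Integrating these pointwise bounds yields the three estimates, and the translation integral of
the zero extension splits into exactly these three pieces.
-/

instance : IsFiniteMeasure μπ := by
  rw [μπ]
  exact isFiniteMeasure_restrict.2 (by simp)

def sineBasis (j : ℕ) (t : ℝ) : ℝ := √(2 / π) * sin ((j + 1) * t)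

theorem sinePartialSumR_apply (a : ℕ → ℝ) (N : ℕ) (t : ℝ) :
    sinePartialSumR a N t = ∑ j ∈ Finset.range N, sineBasis j t * a j :=
  rfl

@[fun_prop]
theorem continuous_sineBasis (j : ℕ) : Continuous (sineBasis j) := by
  unfold sineBasis
  fun_prop

theorem abs_sineBasis_le (j : ℕ) (t : ℝ) : |sineBasis j t| ≤ √(2 / π) := by
  rw [sineBasis, abs_mul, abs_of_nonneg (sqrt_nonneg _)]
  exact mul_le_of_le_one_right (sqrt_nonneg _) (abs_sin_le_one _)

theorem abs_sineBasis_add_sub_le (j : ℕ) (t : ℝ) {h : ℝ} (hh : 0 ≤ h) :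
    |sineBasis j (t + h) - sineBasis j t| ≤ √(2 / π) * min 2 ((j + 1) * h) := by
  set p := (j + 1) * (t + h)
  set q := (j + 1) * t
  have hsin : |sin p - sin q| ≤ min 2 ((j + 1) * h) := by
    refine le_min ?_ ?_
    · linarith [abs_sub (sin p) (sin q), abs_sin_le_one p, abs_sin_le_one q]
    · calc |sin p - sin q| ≤ |p - q| := Real.abs_sin_sub_sin_le p q
        _ = (j + 1) * h := by rw [show p - q = (j + 1) * h by ring, abs_of_nonneg (by positivity)]
  rw [sineBasis, sineBasis, ← mul_sub, abs_mul, abs_of_nonneg (sqrt_nonneg _)]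
  exact mul_le_mul_of_nonneg_left hsin (sqrt_nonneg _)

theorem integral_sin_mul_sin (m n : ℕ) :
    ∫ t in 0..π, sin ((m + 1) * t) * sin ((n + 1) * t) = if m = n then π / 2 else 0 := by
  have hcos : ∀ k : ℤ, k ≠ 0 → ∫ t in 0..π, cos (k * t) = 0 := fun k hk => by
    rw [intervalIntegral.integral_comp_mul_left cos (Int.cast_ne_zero.2 hk)]
    simp [integral_cos, sin_int_mul_pi]
  have hprod : ∀ t : ℝ, sin ((m + 1) * t) * sin ((n + 1) * t) =
      cos (((m - n : ℤ) : ℝ) * t) / 2 - cos (((m + n + 2 : ℤ) : ℝ) * t) / 2 := fun t => by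
    push_cast
    rw [show ((m : ℝ) - n) * t = (m + 1) * t - (n + 1) * t by ring,
      show ((m : ℝ) + n + 2) * t = (m + 1) * t + (n + 1) * t by ring, cos_sub, cos_add]
    ring
  simp_rw [hprod]
  rw [intervalIntegral.integral_sub ((by fun_prop : Continuous _).intervalIntegrable _ _)
    ((by fun_prop : Continuous _).intervalIntegrable _ _), intervalIntegral.integral_div,
    intervalIntegral.integral_div, hcos (m + n + 2) (by omega)]
  split_ifs with hmn
  · simp [hmn]
  · rw [hcos (m - n) (by omega)]
    simp

theorem integral_sineBasis_mul_sineBasis (m n : ℕ) :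
    ∫ t, sineBasis m t * sineBasis n t ∂μπ = if m = n then 1 else 0 := by
  have hsq : √(2 / π) * √(2 / π) = 2 / π := mul_self_sqrt (by positivity)
  calc ∫ t, sineBasis m t * sineBasis n t ∂μπ
      = 2 / π * ∫ t in 0..π, sin ((m + 1) * t) * sin ((n + 1) * t) := by
        rw [intervalIntegral.integral_of_le pi_pos.le, integral_Ioc_eq_integral_Ioo, μπ,
          ← integral_const_mul]
        congr 1 with t
        rw [sineBasis, sineBasis]
        linear_combination sin ((m + 1) * t) * sin ((n + 1) * t) * hsq
    _ = if m = n then 1 else 0 := by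
        rw [integral_sin_mul_sin]
        split_ifs
        · field_simp
        · simp

theorem integrable_μπ_of_continuous {f : ℝ → ℝ} (hf : Continuous f) : Integrable f μπ :=
  hf.integrableOn_Icc.mono_set Set.Ioo_subset_Icc_self

theorem integral_sinePartialSumR_sq (a : ℕ → ℝ) (N : ℕ) :
    ∫ t, sinePartialSumR a N t ^ 2 ∂μπ = ∑ j ∈ Finset.range N, a j ^ 2 := by
  have hexpand : ∀ t, sinePartialSumR a N t ^ 2 = ∑ j ∈ Finset.range N, ∑ k ∈ Finset.range N,
      sineBasis j t * sineBasis k t * (a j * a k) := fun t => by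
    rw [sinePartialSumR_apply, sq, Finset.sum_mul_sum]
    exact Finset.sum_congr rfl fun j _ => Finset.sum_congr rfl fun k _ => by ring
  have hint : ∀ j k, Integrable (fun t => sineBasis j t * sineBasis k t * (a j * a k)) μπ :=
    fun j k => integrable_μπ_of_continuous (by fun_prop)
  simp_rw [hexpand]
  rw [integral_finsetSum _ fun j _ => integrable_finsetSum _ fun k _ => hint j k]
  refine Finset.sum_congr rfl fun j hj => ?_
  rw [integral_finsetSum _ fun k _ => hint j k]
  simp_rw [integral_mul_const, integral_sineBasis_mul_sineBasis, ite_mul, one_mul, zero_mul,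
    Finset.sum_ite_eq, if_pos hj, sq]

theorem abs_sinePartialSumR_le (a : ℕ → ℝ) (N : ℕ) (t : ℝ) :
    |sinePartialSumR a N t| ≤ √(2 / π) * ∑ j ∈ Finset.range N, |a j| := by
  rw [sinePartialSumR_apply, Finset.mul_sum]
  refine (Finset.abs_sum_le_sum_abs _ _).trans (Finset.sum_le_sum fun j _ => ?_)
  rw [abs_mul]
  exact mul_le_mul_of_nonneg_right (abs_sineBasis_le j t) (abs_nonneg _)

theorem memLp_sinePartialSumR (a : ℕ → ℝ) (N : ℕ) : MemLp (sinePartialSumR a N) 2 μπ :=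
  MemLp.of_bound (Continuous.aestronglyMeasurable (by unfold sinePartialSumR; fun_prop)) _
    (ae_of_all _ fun t => abs_sinePartialSumR_le a N t)

theorem MeasureTheory.MemLp.toReal_eLpNorm_two_sq {α : Type*} [MeasurableSpace α] {μ : Measure α}
    {f : α → ℝ} (hf : MemLp f 2 μ) : (eLpNorm f 2 μ).toReal ^ 2 = ∫ t, f t ^ 2 ∂μ := by
  have hnn : 0 ≤ ∫ t, f t ^ 2 ∂μ := integral_nonneg fun t => sq_nonneg _
  rw [hf.eLpNorm_eq_integral_rpow_norm two_ne_zero ENNReal.ofNat_ne_top,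
    ENNReal.toReal_ofReal (by positivity)]
  simp_rw [ENNReal.toReal_ofNat, rpow_two, norm_eq_abs, sq_abs]
  rw [← rpow_natCast, ← rpow_mul hnn]
  norm_num

theorem HasSineExpansionR.hasSum_sq {g : ℝ → ℝ} {b : ℕ → ℝ} (hgb : HasSineExpansionR g b)
    (hg : MemLp g 2 μπ) : HasSum (fun j => b j ^ 2) (∫ t, g t ^ 2 ∂μπ) := by
  have hLp : Tendsto (fun N => (memLp_sinePartialSumR b N).toLp _) atTop (𝓝 (hg.toLp g)) := by
    rw [Lp.tendsto_Lp_iff_tendsto_eLpNorm'']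
    simp_rw [eLpNorm_sub_comm _ g]
    exact hgb
  rw [hasSum_iff_tendsto_nat_of_nonneg (fun j => sq_nonneg _)]
  convert (hLp.norm.pow 2) using 1
  · ext N
    rw [Lp.norm_toLp, (memLp_sinePartialSumR b N).toReal_eLpNorm_two_sq,
      integral_sinePartialSumR_sq]
  · rw [Lp.norm_toLp, hg.toReal_eLpNorm_two_sq]

def sineSeries (a : ℕ → ℝ) (t : ℝ) : ℝ := ∑' j, sineBasis j t * a j

section SineSeries

variable {a : ℕ → ℝ}

theorem hasSum_sineSeries (ha : Summable fun j => |a j|) (t : ℝ) :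
    HasSum (fun j => sineBasis j t * a j) (sineSeries a t) :=
  (Summable.of_norm_bounded (ha.mul_left √(2 / π)) fun j => by
    rw [Real.norm_eq_abs, abs_mul]
    exact mul_le_mul_of_nonneg_right (abs_sineBasis_le j t) (abs_nonneg _)).hasSum

theorem abs_sineSeries_le (ha : Summable fun j => |a j|) (t : ℝ) :
    |sineSeries a t| ≤ √(2 / π) * ∑' j, |a j| := by
  rw [← tsum_mul_left, ← Real.norm_eq_abs, sineSeries]
  refine tsum_of_norm_bounded (ha.mul_left _).hasSum fun j => ?_
  rw [Real.norm_eq_abs, abs_mul]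
  exact mul_le_mul_of_nonneg_right (abs_sineBasis_le j t) (abs_nonneg _)

theorem abs_sineSeries_add_sub_le (ha : Summable fun j => |a j|) (t : ℝ) {h : ℝ} (hh : 0 ≤ h) :
    |sineSeries a (t + h) - sineSeries a t| ≤ √(2 / π) * ∑' j, |a j| * min 2 ((j + 1) * h) := by
  have hsum : Summable fun j : ℕ => |a j| * min 2 ((j + 1) * h) :=
    Summable.of_nonneg_of_le (fun j => by positivity)
      (fun j => mul_le_mul_of_nonneg_left (min_le_left _ _) (abs_nonneg _)) (ha.mul_right 2)
  rw [← tsum_mul_left, ← Real.norm_eq_abs,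
    ← ((hasSum_sineSeries ha (t + h)).sub (hasSum_sineSeries ha t)).tsum_eq]
  refine tsum_of_norm_bounded (hsum.mul_left _).hasSum fun j => ?_
  rw [Real.norm_eq_abs, ← sub_mul, abs_mul, mul_left_comm, mul_comm]
  exact mul_le_mul_of_nonneg_left (abs_sineBasis_add_sub_le j t hh) (abs_nonneg _)

theorem HasSineExpansionR.ae_eq_sineSeries {x : ℝ → ℝ} (hxa : HasSineExpansionR x a)
    (hx : AEStronglyMeasurable x μπ) (ha : Summable fun j => |a j|) : x =ᵐ[μπ] sineSeries a := by
  have hmeas : TendstoInMeasure μπ (sinePartialSumR a) atTop x := by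
    refine tendstoInMeasure_of_tendsto_eLpNorm two_ne_zero
      (fun N => (memLp_sinePartialSumR a N).1) hx ?_
    simp_rw [eLpNorm_sub_comm _ x]
    exact hxa
  -- a subsequence of the partial sums converges to `x` a.e., the whole sequence to the series
  obtain ⟨ns, hns, hae⟩ := hmeas.exists_seq_tendsto_ae'
  filter_upwards [hae] with t ht
  exact tendsto_nhds_unique ht ((hasSum_sineSeries ha t).tendsto_sum_nat.comp hns)

end SineSeries

theorem summable_and_sq_tsum_mul_le {ι : Type*} {u v : ι → ℝ} (hu : ∀ i, 0 ≤ u i)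
    (hv : ∀ i, 0 ≤ v i) (hu2 : Summable fun i => u i ^ 2) (hv2 : Summable fun i => v i ^ 2) :
    Summable (fun i => u i * v i) ∧
      (∑' i, u i * v i) ^ 2 ≤ (∑' i, u i ^ 2) * ∑' i, v i ^ 2 := by
  simp_rw [← rpow_two] at hu2 hv2 ⊢
  obtain ⟨hsum, hle⟩ :=
    summable_and_inner_le_Lp_mul_Lq_tsum_of_nonneg Real.HolderConjugate.two_two hu hv hu2 hv2
  refine ⟨hsum, ?_⟩
  have hU : 0 ≤ ∑' i, u i ^ (2 : ℝ) := tsum_nonneg fun i => rpow_nonneg (hu i) _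
  have hV : 0 ≤ ∑' i, v i ^ (2 : ℝ) := tsum_nonneg fun i => rpow_nonneg (hv i) _
  calc (∑' i, u i * v i) ^ (2 : ℝ)
      ≤ ((∑' i, u i ^ (2 : ℝ)) ^ (1 / 2 : ℝ) * (∑' i, v i ^ (2 : ℝ)) ^ (1 / 2 : ℝ)) ^ (2 : ℝ) :=
        rpow_le_rpow (tsum_nonneg fun i => mul_nonneg (hu i) (hv i)) hle zero_le_two
    _ = (∑' i, u i ^ (2 : ℝ)) * ∑' i, v i ^ (2 : ℝ) := by
        rw [mul_rpow (by positivity) (by positivity), ← rpow_mul hU, ← rpow_mul hV]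
        norm_num

theorem zeta'_nonneg (s : ℝ) : 0 ≤ zeta' s :=
  tsum_nonneg fun _ => by positivity

theorem summable_one_add_rpow_neg {s : ℝ} (hs : 1 < s) :
    Summable fun j : ℕ => ((j : ℝ) + 1) ^ (-s) := by
  refine ((summable_nat_add_iff 1).2 (summable_nat_rpow_inv.2 hs)).congr fun j => ?_
  rw [rpow_neg (by positivity)]
  push_cast
  rfl

theorem one_add_rpow_neg_sq (j : ℕ) (r : ℝ) :
    (((j : ℝ) + 1) ^ (-r)) ^ 2 = ((j : ℝ) + 1) ^ (-(2 * r)) := by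
  rw [← rpow_natCast, ← rpow_mul (by positivity)]
  ring_nf

section Coefficients

variable {r : ℝ} {b : ℕ → ℝ}

theorem sq_tsum_abs_rpow_mul_le (hb : Summable fun j => b j ^ 2) {w : ℕ → ℝ}
    (hw0 : ∀ j, 0 ≤ w j) (hw : Summable fun j : ℕ => (((j : ℝ) + 1) ^ (-r) * w j) ^ 2) :
    Summable (fun j : ℕ => |((j : ℝ) + 1) ^ (-r) * b j| * w j) ∧
      (∑' j : ℕ, |((j : ℝ) + 1) ^ (-r) * b j| * w j) ^ 2 ≤
        (∑' j : ℕ, (((j : ℝ) + 1) ^ (-r) * w j) ^ 2) * ∑' j, b j ^ 2 := by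
  have hcomm : ∀ j : ℕ, |((j : ℝ) + 1) ^ (-r) * b j| * w j = ((j + 1) ^ (-r) * w j) * |b j| :=
    fun j => by rw [abs_mul, abs_of_nonneg (by positivity)]; ring
  simp_rw [hcomm, ← sq_abs (b _)]
  exact summable_and_sq_tsum_mul_le (fun j => mul_nonneg (by positivity) (hw0 j))
    (fun j => abs_nonneg _) hw (by simpa only [sq_abs] using hb)

theorem summable_and_sq_tsum_abs_rpow_mul_le_zeta (hr : 1 / 4 < r)
    (hb : Summable fun j => b j ^ 2) :
    (Summable fun j : ℕ => |((j : ℝ) + 1) ^ (-(2 * r)) * b j|) ∧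
      (∑' j : ℕ, |((j : ℝ) + 1) ^ (-(2 * r)) * b j|) ^ 2 ≤ zeta' (4 * r) * ∑' j, b j ^ 2 := by
  have hw : Summable fun j : ℕ => (((j : ℝ) + 1) ^ (-(2 * r)) * 1) ^ 2 := by
    simp_rw [mul_one, one_add_rpow_neg_sq]
    exact summable_one_add_rpow_neg (by linarith)
  have := sq_tsum_abs_rpow_mul_le hb (fun _ => zero_le_one) hw
  simp_rw [mul_one, one_add_rpow_neg_sq] at this
  rwa [zeta', show 4 * r = 2 * (2 * r) by ring]

theorem min_two_sq_le {y : ℝ} (hy : 0 ≤ y) : min 2 y ^ 2 ≤ 2 * y := by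
  rcases le_total y 2 with h | h
  · rw [min_eq_right h]
    nlinarith
  · rw [min_eq_left h]
    linarith

theorem sq_tsum_abs_rpow_mul_min_le_zeta (hr : 1 / 2 < r) (hb : Summable fun j => b j ^ 2)
    {h : ℝ} (hh : 0 ≤ h) :
    (∑' j : ℕ, |((j : ℝ) + 1) ^ (-(2 * r)) * b j| * min 2 ((j + 1) * h)) ^ 2 ≤
      2 * h * zeta' (4 * r - 1) * ∑' j, b j ^ 2 := by
  have hbound : ∀ j : ℕ, (((j : ℝ) + 1) ^ (-(2 * r)) * min 2 ((j + 1) * h)) ^ 2 ≤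
      2 * h * ((j : ℝ) + 1) ^ (-(4 * r - 1)) := fun j => by
    have hpos : (0 : ℝ) < j + 1 := by positivity
    rw [mul_pow, one_add_rpow_neg_sq, show -(4 * r - 1) = -(2 * (2 * r)) + 1 by ring,
      rpow_add_one hpos.ne']
    calc ((j : ℝ) + 1) ^ (-(2 * (2 * r))) * min 2 ((j + 1) * h) ^ 2
        ≤ ((j : ℝ) + 1) ^ (-(2 * (2 * r))) * (2 * ((j + 1) * h)) :=
          mul_le_mul_of_nonneg_left (min_two_sq_le (by positivity)) (by positivity)
      _ = _ := by ring
  have hzeta : Summable fun j : ℕ => 2 * h * ((j : ℝ) + 1) ^ (-(4 * r - 1)) :=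
    (summable_one_add_rpow_neg (by linarith)).mul_left _
  have hw : Summable fun j : ℕ => (((j : ℝ) + 1) ^ (-(2 * r)) * min 2 ((j + 1) * h)) ^ 2 :=
    Summable.of_nonneg_of_le (fun j => sq_nonneg _) hbound hzeta
  refine (sq_tsum_abs_rpow_mul_le hb (fun j => le_min zero_le_two (by positivity)) hw).2.trans ?_
  rw [zeta', ← tsum_mul_left (a := 2 * h)]
  exact mul_le_mul_of_nonneg_right (hw.tsum_le_tsum hbound hzeta)
    (tsum_nonneg fun j => sq_nonneg _)

end Coefficients

theorem setIntegral_sq_le_of_ae_sq_le {α : Type*} [MeasurableSpace α] {μ : Measure α}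
    {f : α → ℝ} {s : Set α} {M : ℝ} (hs : μ s < ⊤) (hf : ∀ᵐ t ∂μ, t ∈ s → f t ^ 2 ≤ M) :
    ∫ t in s, f t ^ 2 ∂μ ≤ M * μ.real s := by
  refine (le_abs_self _).trans ?_
  rw [← Real.norm_eq_abs]
  refine norm_setIntegral_le_of_norm_le_const_ae' hs ?_
  filter_upwards [hf] with t ht hts
  rw [Real.norm_eq_abs, abs_of_nonneg (sq_nonneg _)]
  exact ht hts

theorem integral_sq_sub_comp_add_neg (f : ℝ → ℝ) (h : ℝ) :
    ∫ t, (f (t + -h) - f t) ^ 2 = ∫ t, (f (t + h) - f t) ^ 2 := by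
  rw [← integral_add_right_eq_self (fun t => (f (t + -h) - f t) ^ 2) h]
  congr 1 with t
  rw [add_neg_cancel_right]
  ring

theorem integral_sq_sub_comp_add_indicator_eq {x : ℝ → ℝ} {L h : ℝ}
    (hx : MemLp x 2 (volume.restrict (Set.Ioo 0 L))) (h0 : 0 ≤ h) (hL : h ≤ L) :
    ∫ t, ((Set.Ioo 0 L).indicator x (t + h) - (Set.Ioo 0 L).indicator x t) ^ 2 =
      (∫ t in Set.Ioo 0 h, x t ^ 2) + (∫ t in Set.Ioo 0 (L - h), (x (t + h) - x t) ^ 2) +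
        ∫ t in Set.Ioo (L - h) L, x t ^ 2 := by
  set f := (Set.Ioo 0 L).indicator x
  set F := fun t => (f (t + h) - f t) ^ 2
  have hf : MemLp f 2 volume := (memLp_indicator_iff_restrict measurableSet_Ioo).2 hx
  have hF : Integrable F :=
    ((hf.comp_measurePreserving (measurePreserving_add_right volume h)).sub hf).integrable_sq
  have hf0 : ∀ t, t ≤ 0 ∨ L ≤ t → f t = 0 := fun t ht =>
    Set.indicator_of_notMem (fun hm => by rcases ht with ht | ht <;> linarith [hm.1, hm.2]) _
  have hfx : ∀ t ∈ Set.Ioo 0 L, f t = x t := fun t ht => Set.indicator_of_mem ht _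
  have hII : ∀ a b, IntervalIntegrable F volume a b := fun a b => hF.intervalIntegrable
  have hwhole : ∫ t, F t = ∫ t in (-h)..L, F t := by
    rw [intervalIntegral.integral_of_le (by linarith),
      setIntegral_eq_integral_of_forall_compl_eq_zero fun t ht => ?_]
    simp only [Set.mem_Ioc, not_and_or, not_lt, not_le] at ht
    rcases ht with ht | ht
    · simp [F, hf0 t (.inl (by linarith)), hf0 (t + h) (.inl (by linarith))]
    · simp [F, hf0 t (.inr ht.le), hf0 (t + h) (.inr (by linarith))]
  have hleft : ∫ t in (-h)..0, F t = ∫ t in Set.Ioo 0 h, x t ^ 2 := by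
    rw [intervalIntegral.integral_congr (g := fun t => f (t + h) ^ 2) fun t ht => ?_,
      intervalIntegral.integral_comp_add_right (fun t => f t ^ 2), neg_add_cancel, zero_add,
      intervalIntegral.integral_of_le h0, integral_Ioc_eq_integral_Ioo]
    · exact setIntegral_congr_fun measurableSet_Ioo fun t ht => by
        simp only [hfx t ⟨ht.1, ht.2.trans_le hL⟩]
    · rw [Set.uIcc_of_le (by linarith)] at ht
      simp [F, hf0 t (.inl ht.2)]
  have hmid : ∫ t in (0)..(L - h), F t = ∫ t in Set.Ioo 0 (L - h), (x (t + h) - x t) ^ 2 := by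
    rw [intervalIntegral.integral_of_le (by linarith), integral_Ioc_eq_integral_Ioo]
    exact setIntegral_congr_fun measurableSet_Ioo fun t ht => by
      simp only [F, hfx t ⟨ht.1, by linarith [ht.2]⟩,
        hfx (t + h) ⟨by linarith [ht.1], by linarith [ht.2]⟩]
  have hright : ∫ t in (L - h)..L, F t = ∫ t in Set.Ioo (L - h) L, x t ^ 2 := by
    rw [intervalIntegral.integral_of_le (by linarith), integral_Ioc_eq_integral_Ioo]
    exact setIntegral_congr_fun measurableSet_Ioo fun t ht => by
      simp [F, hf0 (t + h) (.inr (by linarith [ht.1])), hfx t ⟨by linarith [ht.1], ht.2⟩]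
  rw [hwhole, ← intervalIntegral.integral_add_adjacent_intervals (hII _ _) (hII (L - h) L),
    ← intervalIntegral.integral_add_adjacent_intervals (hII (-h) 0) (hII _ _), hleft, hmid, hright]

theorem integral_sq_sub_comp_add_indicator_le {x : ℝ → ℝ} {L K : ℝ}
    (hx : MemLp x 2 (volume.restrict (Set.Ioo 0 L)))
    (hK : ∀ h, 0 < h → h < L → (∫ t in Set.Ioo 0 h, x t ^ 2) +
      (∫ t in Set.Ioo 0 (L - h), (x (t + h) - x t) ^ 2) + (∫ t in Set.Ioo (L - h) L, x t ^ 2) ≤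
        K * h)
    {h : ℝ} (hh : |h| < L) :
    ∫ t, ((Set.Ioo 0 L).indicator x (t + h) - (Set.Ioo 0 L).indicator x t) ^ 2 ≤ K * |h| := by
  rcases lt_trichotomy h 0 with hneg | rfl | hpos
  · rw [abs_of_neg hneg] at hh ⊢
    have hreflect := integral_sq_sub_comp_add_neg ((Set.Ioo 0 L).indicator x) (-h)
    rw [neg_neg] at hreflect
    rw [hreflect, integral_sq_sub_comp_add_indicator_eq hx (by linarith) hh.le]
    exact hK _ (by linarith) hh
  · simp
  · rw [abs_of_pos hpos] at hh ⊢
    rw [integral_sq_sub_comp_add_indicator_eq hx hpos.le hh.le]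
    exact hK _ hpos hh

section Solution

variable {β : ℝ} {b : ℕ → ℝ} {x : ℝ → ℝ}

theorem HasSineExpansionR.ae_eq_sineSeries_of_rpow_mul (hβ : 1 / 4 < β)
    (hb : Summable fun j => b j ^ 2) (hx : AEStronglyMeasurable x μπ)
    (hxb : HasSineExpansionR x fun j => ((j : ℝ) + 1) ^ (-(2 * β)) * b j) :
    ∀ᵐ t, t ∈ Set.Ioo 0 π → x t = sineSeries (fun j => ((j : ℝ) + 1) ^ (-(2 * β)) * b j) t :=
  (ae_restrict_iff' measurableSet_Ioo).1
    (hxb.ae_eq_sineSeries hx (summable_and_sq_tsum_abs_rpow_mul_le_zeta hβ hb).1)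

theorem HasSineExpansionR.ae_sq_le (hβ : 1 / 4 < β) (hb : Summable fun j => b j ^ 2)
    (hx : AEStronglyMeasurable x μπ)
    (hxb : HasSineExpansionR x fun j => ((j : ℝ) + 1) ^ (-(2 * β)) * b j) :
    ∀ᵐ t, t ∈ Set.Ioo 0 π → x t ^ 2 ≤ 2 / π * zeta' (4 * β) * ∑' j, b j ^ 2 := by
  obtain ⟨hsum, hsq⟩ := summable_and_sq_tsum_abs_rpow_mul_le_zeta hβ hb
  filter_upwards [hxb.ae_eq_sineSeries_of_rpow_mul hβ hb hx] with t hxt ht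
  rw [hxt ht, ← sq_abs, mul_assoc, ← sq_sqrt (by positivity : (0 : ℝ) ≤ 2 / π)]
  calc _ ≤ (√(2 / π) * ∑' j : ℕ, |((j : ℝ) + 1) ^ (-(2 * β)) * b j|) ^ 2 :=
        pow_le_pow_left₀ (abs_nonneg _) (abs_sineSeries_le hsum t) 2
    _ ≤ _ := by
        rw [mul_pow]
        exact mul_le_mul_of_nonneg_left hsq (sq_nonneg _)

theorem HasSineExpansionR.ae_sq_sub_le (hβ : 1 / 2 < β) (hb : Summable fun j => b j ^ 2)
    (hx : AEStronglyMeasurable x μπ)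
    (hxb : HasSineExpansionR x fun j => ((j : ℝ) + 1) ^ (-(2 * β)) * b j) {h : ℝ} (hh : 0 ≤ h) :
    ∀ᵐ t, t ∈ Set.Ioo 0 (π - h) →
      (x (t + h) - x t) ^ 2 ≤ 2 / π * (2 * h * zeta' (4 * β - 1) * ∑' j, b j ^ 2) := by
  have hae := hxb.ae_eq_sineSeries_of_rpow_mul (by linarith) hb hx
  filter_upwards [hae, (measurePreserving_add_right volume h).quasiMeasurePreserving.ae hae]
    with t hxt hxth ht
  rw [hxt ⟨ht.1, by linarith [ht.2]⟩, hxth ⟨by linarith [ht.1], by linarith [ht.2]⟩, ← sq_abs,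
    ← sq_sqrt (by positivity : (0 : ℝ) ≤ 2 / π)]
  calc _ ≤ (√(2 / π) * ∑' j : ℕ, |((j : ℝ) + 1) ^ (-(2 * β)) * b j| * min 2 ((j + 1) * h)) ^ 2 :=
        pow_le_pow_left₀ (abs_nonneg _)
          (abs_sineSeries_add_sub_le
            (summable_and_sq_tsum_abs_rpow_mul_le_zeta (by linarith) hb).1 t hh) 2
    _ ≤ _ := by
        rw [mul_pow]
        exact mul_le_mul_of_nonneg_left (sq_tsum_abs_rpow_mul_min_le_zeta hβ hb hh) (sq_nonneg _)

theorem HasSineExpansionR.setIntegral_sq_le (hβ : 1 / 4 < β) (hb : Summable fun j => b j ^ 2)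
    {C : ℝ} (hbC : ∑' j, b j ^ 2 ≤ C) (hx : AEStronglyMeasurable x μπ)
    (hxb : HasSineExpansionR x fun j => ((j : ℝ) + 1) ^ (-(2 * β)) * b j)
    {u v : ℝ} (hu : 0 ≤ u) (huv : u ≤ v) (hv : v ≤ π) :
    ∫ t in Set.Ioo u v, x t ^ 2 ≤ 2 / π * C * zeta' (4 * β) * (v - u) := by
  refine (setIntegral_sq_le_of_ae_sq_le (by simp) ((hxb.ae_sq_le hβ hb hx).mono
    fun t ht hts => ht ⟨hu.trans_lt hts.1, hts.2.trans_le hv⟩)).trans ?_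
  rw [Real.volume_real_Ioo_of_le huv, mul_right_comm (2 / π)]
  have := zeta'_nonneg (4 * β)
  gcongr

theorem HasSineExpansionR.setIntegral_sq_sub_le (hβ : 1 / 2 < β)
    (hb : Summable fun j => b j ^ 2) {C : ℝ} (hbC : ∑' j, b j ^ 2 ≤ C)
    (hx : AEStronglyMeasurable x μπ)
    (hxb : HasSineExpansionR x fun j => ((j : ℝ) + 1) ^ (-(2 * β)) * b j)
    {h : ℝ} (h0 : 0 ≤ h) (hπ : h ≤ π) :
    ∫ t in Set.Ioo 0 (π - h), (x (t + h) - x t) ^ 2 ≤ 4 * C * zeta' (4 * β - 1) * h := by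
  refine (setIntegral_sq_le_of_ae_sq_le (by simp) (hxb.ae_sq_sub_le hβ hb hx h0)).trans ?_
  rw [Real.volume_real_Ioo_of_le (by linarith), sub_zero]
  have := zeta'_nonneg (4 * β - 1)
  have : 0 ≤ ∑' j, b j ^ 2 := tsum_nonneg fun j => sq_nonneg _
  calc 2 / π * (2 * h * zeta' (4 * β - 1) * ∑' j, b j ^ 2) * (π - h)
      ≤ 2 / π * (2 * h * zeta' (4 * β - 1) * ∑' j, b j ^ 2) * π := by gcongr; linarith
    _ = 4 * (∑' j, b j ^ 2) * zeta' (4 * β - 1) * h := by field_simp; ring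
    _ ≤ 4 * C * zeta' (4 * β - 1) * h := by gcongr

end Solution

/-- **Translation estimates for solutions of `(-Δ)^β x = g`.**
Let `β > 1/2`, `g ∈ L²((0,π),ℝ)` with `‖g‖²_{L²} ≤ C` and sine coefficients `b`, and let
`x = x_g` be the solution of `(-Δ)^β x = g`, i.e. the function with sine coefficients
`j^{-2β} b_j`.  Then for `0 < h < π`:
`∫₀^h x² ≤ (2/π) C ζ(4β) h`, `∫_{π−h}^π x² ≤ (2/π) C ζ(4β) h`, and
`∫₀^{π−h} (x(t+h) − x(t))² dt ≤ 4 C ζ(4β−1) h`; consequently the extension of `x` by zero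
satisfies `∫_ℝ (x̃(t+h) − x̃(t))² dt ≤ const |h|` for `|h| < π`, with a constant depending
only on `C` and `β`. -/
theorem translation_estimates (β : ℝ) (hβ : β > 1 / 2) (C : ℝ)
    (g x : ℝ → ℝ) (b : ℕ → ℝ)
    (hg : MemLp g 2 μπ) (hgb : HasSineExpansionR g b)
    (hC : (∫ t in Set.Ioo 0 Real.pi, g t ^ 2) ≤ C)
    (hx : MemLp x 2 μπ)
    (hxb : HasSineExpansionR x fun j => ((j : ℝ) + 1) ^ (-(2 * β)) * b j) :
    (∀ h : ℝ, 0 < h → h < Real.pi →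
      (∫ t in Set.Ioo 0 h, x t ^ 2) ≤ 2 / Real.pi * C * zeta' (4 * β) * h ∧
      (∫ t in Set.Ioo (Real.pi - h) Real.pi, x t ^ 2) ≤ 2 / Real.pi * C * zeta' (4 * β) * h ∧
      (∫ t in Set.Ioo 0 (Real.pi - h), (x (t + h) - x t) ^ 2) ≤
        4 * C * zeta' (4 * β - 1) * h) ∧
    (∀ h : ℝ, |h| < Real.pi →
      (∫ t : ℝ, ((if t + h ∈ Set.Ioo 0 Real.pi then x (t + h) else 0) -
          (if t ∈ Set.Ioo 0 Real.pi then x t else 0)) ^ 2) ≤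
        (4 / Real.pi * C * zeta' (4 * β) + 4 * C * zeta' (4 * β - 1)) * |h|) := by
  have hbsum := hgb.hasSum_sq hg
  have hbC : ∑' j, b j ^ 2 ≤ C := hbsum.tsum_eq ▸ hC
  have estimates : ∀ h : ℝ, 0 < h → h < π →
      (∫ t in Set.Ioo 0 h, x t ^ 2) ≤ 2 / π * C * zeta' (4 * β) * h ∧
      (∫ t in Set.Ioo (π - h) π, x t ^ 2) ≤ 2 / π * C * zeta' (4 * β) * h ∧
      (∫ t in Set.Ioo 0 (π - h), (x (t + h) - x t) ^ 2) ≤ 4 * C * zeta' (4 * β - 1) * h :=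
    fun h h0 hπ => by
      have hβ' : 1 / 4 < β := by linarith
      have hleft := hxb.setIntegral_sq_le hβ' hbsum.summable hbC hx.1 le_rfl h0.le hπ.le
      have hright := hxb.setIntegral_sq_le hβ' hbsum.summable hbC hx.1 (u := π - h)
        (by linarith) (by linarith) le_rfl
      rw [sub_zero] at hleft
      rw [sub_sub_cancel] at hright
      exact ⟨hleft, hright, hxb.setIntegral_sq_sub_le hβ hbsum.summable hbC hx.1 h0.le hπ.le⟩
  refine ⟨estimates, fun h hh => ?_⟩
  simpa only [Set.indicator_apply] using integral_sq_sub_comp_add_indicator_le hx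
    (fun h h0 hπ => by obtain ⟨h1, h2, h3⟩ := estimates h h0 hπ; linear_combination h1 + h3 + h2) hh
end
end
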